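/- (Stable decomposition for GenEO with inexact coarse solve) In addition to the hypotheses: ∑_{i=1}^N R_iᵀ D_i R_i = I; ‖∑_{i=1}^N R_iᵀ U_i‖_A² ≤ k₀ ∑_{i=1}^N ‖R_iᵀ U_i‖_A² for all U_i; ∑_{j=1}^N ⟨R_j A R_jᵀ D_j (I − π̃_j) R_j U, D_j (I − π̃_j) R_j U⟩ ≤ k₁ τ ⟨A U, U⟩ for all U; assume range(R_jᵀ D_j π̃_j) ⊆ V₀ for every j, and μ′ ⟨Ẽ u, u⟩ ≤ ⟨E u, u⟩ for all u ∈ ℝᵐ for some μ′ > 0. Let ε_A := ‖P₀ − P̃₀‖_A and c_T := μ′ / ( (1 + ε_A √(k₀ k₁ τ))² + μ′ k₁ τ ). Then for every U ∈ ℝⁿ there exist U₀ ∈ ℝᵐ and U_i ∈ ℝ^{n_i} (namely U_i = D_i (I − π̃_i) R_i U) such that U = Z U₀ + (I − P̃₀) ∑_{i=1}^N R_iᵀ U_i and c_T ( ⟨Ẽ U₀, U₀⟩ + ∑_{i=1}^N ⟨R_i A R_iᵀ U_i, U_i⟩ ) ≤ ⟨A U, U⟩. -/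

import Mathlib

/-!
The partition of unity splits `U = W + Z β` with `W = ∑ Rᵢᵀ Dᵢ (I - π̃ᵢ) Rᵢ U`, because the
`π̃`-parts lie in `V₀`. Take `U₀ = β + Ẽ⁻¹ Zᵀ A W`, so that `Z U₀ = U - (I - P̃₀) W`. With the
`A`-orthogonal projection `P₀` onto `V₀` this reads `Z U₀ = P₀ U - (P₀ - P̃₀) W`, hence
`‖Z U₀‖_A ≤ ‖U‖_A + ε_A ‖W‖_A ≤ (1 + ε_A √(k₀ k₁ τ)) ‖U‖_A`, since the `k₀`- and GenEO bounds give
`‖W‖_A² ≤ k₀ ∑ ⟨Rᵢ A Rᵢᵀ Uᵢ, Uᵢ⟩ ≤ k₀ k₁ τ ‖U‖_A²`. Then `μ′ ⟨Ẽ U₀, U₀⟩ ≤ ‖Z U₀‖_A²` and the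
GenEO bound on the local terms add up to the constant `c_T`.
-/

open Matrix

/-- The norm induced by an SPD matrix `A`: `‖x‖_A = √(⟨A x, x⟩)`. -/
noncomputable def aNorm {n : ℕ} (A : Matrix (Fin n) (Fin n) ℝ) (x : Fin n → ℝ) : ℝ :=
  Real.sqrt ((A *ᵥ x) ⬝ᵥ x)

/-- The operator norm of a matrix `M` induced by the `A`-norm. -/
noncomputable def aOpNorm {n : ℕ} (A M : Matrix (Fin n) (Fin n) ℝ) : ℝ :=
  sSup { t : ℝ | ∃ x : Fin n → ℝ, x ≠ 0 ∧ t = aNorm A (M *ᵥ x) / aNorm A x }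

lemma LinearMap.exists_norm_apply_le {E F : Type*} [NormedAddCommGroup E] [NormedSpace ℝ E]
    [FiniteDimensional ℝ E] [NormedAddCommGroup F] [NormedSpace ℝ F] (f : E →ₗ[ℝ] F) :
    ∃ C, ∀ x, ‖f x‖ ≤ C * ‖x‖ :=
  let ⟨C, _, hC⟩ := SemilinearMapClass.bound_of_continuous f f.continuous_of_finiteDimensional
  ⟨C, hC⟩

namespace Matrix

variable {R m n p : Type*} [CommSemiring R] [Fintype m] [Fintype n] [Fintype p]

lemma mulVec_dotProduct_mulVec (B : Matrix m n R) (C : Matrix m p R) (x : n → R) (y : p → R) :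
    (B *ᵥ x) ⬝ᵥ (C *ᵥ y) = ((Cᵀ * B) *ᵥ x) ⬝ᵥ y := by
  rw [dotProduct_mulVec, ← mulVec_transpose, mulVec_mulVec]

lemma transpose_mul_mul_mulVec_dotProduct (A : Matrix m m R) (B : Matrix m n R) (x : n → R) :
    ((Bᵀ * A * B) *ᵥ x) ⬝ᵥ x = (A *ᵥ (B *ᵥ x)) ⬝ᵥ (B *ᵥ x) := by
  rw [mulVec_dotProduct_mulVec, mulVec_mulVec, Matrix.mul_assoc]

end Matrix

/-- `Z E⁻¹ Zᵀ A`: the exact coarse projection `P₀` for `E = Zᵀ A Z`, and `P̃₀` for `E = Ẽ`. -/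
noncomputable def coarseCorrection {n m : ℕ} (A : Matrix (Fin n) (Fin n) ℝ)
    (Z : Matrix (Fin n) (Fin m) ℝ) (E : Matrix (Fin m) (Fin m) ℝ) : Matrix (Fin n) (Fin n) ℝ :=
  Z * E⁻¹ * Zᵀ * A

section ANorm

variable {n : ℕ} {A : Matrix (Fin n) (Fin n) ℝ}

lemma aNorm_nonneg (A : Matrix (Fin n) (Fin n) ℝ) (x : Fin n → ℝ) : 0 ≤ aNorm A x :=
  Real.sqrt_nonneg _

lemma aNorm_sq (hA : A.PosSemidef) (x : Fin n → ℝ) : aNorm A x ^ 2 = (A *ᵥ x) ⬝ᵥ x :=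
  Real.sq_sqrt (dotProduct_comm x _ ▸ by simpa using hA.dotProduct_mulVec_nonneg x)

/- `aNorm A` is definitionally the norm of `Matrix.toSeminormedAddCommGroup`, whose inner product
is `⟪x, y⟫ = ⟨A y, x⟩`. As `Fin n → ℝ` already carries the sup norm, these structures have to be
supplied explicitly. -/

lemma aNorm_sub_le (hA : A.PosSemidef) (x y : Fin n → ℝ) :
    aNorm A (x - y) ≤ aNorm A x + aNorm A y :=
  @norm_sub_le _ (A.toSeminormedAddCommGroup hA).toSeminormedAddGroup x y

lemma mulVec_dotProduct_le_aNorm_mul (hA : A.PosSemidef) (x y : Fin n → ℝ) :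
    (A *ᵥ y) ⬝ᵥ x ≤ aNorm A x * aNorm A y :=
  @real_inner_le_norm _ (A.toSeminormedAddCommGroup hA) (A.toInnerProductSpace hA) x y

lemma aNorm_pos (hA : A.PosDef) {x : Fin n → ℝ} (hx : x ≠ 0) : 0 < aNorm A x :=
  (@norm_pos_iff _ (A.toNormedAddCommGroup hA).toNormedAddGroup x).2 hx

lemma exists_aNorm_mulVec_le (hA : A.PosDef) (M : Matrix (Fin n) (Fin n) ℝ) :
    ∃ C, ∀ x, aNorm A (M *ᵥ x) ≤ C * aNorm A x :=
  @LinearMap.exists_norm_apply_le _ _ (A.toNormedAddCommGroup hA)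
    (A.toInnerProductSpace hA.posSemidef).toNormedSpace _ (A.toNormedAddCommGroup hA)
    (A.toInnerProductSpace hA.posSemidef).toNormedSpace (Matrix.toLin' M)

lemma aNorm_mulVec_le_aOpNorm_mul (hA : A.PosDef) (M : Matrix (Fin n) (Fin n) ℝ)
    (x : Fin n → ℝ) : aNorm A (M *ᵥ x) ≤ aOpNorm A M * aNorm A x := by
  rcases eq_or_ne x 0 with rfl | hx
  · simp [aNorm]
  obtain ⟨C, hC⟩ := exists_aNorm_mulVec_le hA M
  have hbdd : BddAbove {t : ℝ | ∃ x : Fin n → ℝ, x ≠ 0 ∧ t = aNorm A (M *ᵥ x) / aNorm A x} := by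
    refine ⟨C, ?_⟩
    rintro _ ⟨y, hy, rfl⟩
    exact (div_le_iff₀ (aNorm_pos hA hy)).2 (hC y)
  exact (div_le_iff₀ (aNorm_pos hA hx)).1 (le_csSup hbdd ⟨x, hx, rfl⟩)

lemma aOpNorm_nonneg (A M : Matrix (Fin n) (Fin n) ℝ) : 0 ≤ aOpNorm A M :=
  Real.sSup_nonneg <| by
    rintro _ ⟨x, -, rfl⟩
    exact div_nonneg (aNorm_nonneg A _) (aNorm_nonneg A _)

end ANorm

section CoarseCorrection

variable {n m : ℕ} {A : Matrix (Fin n) (Fin n) ℝ} {Z : Matrix (Fin n) (Fin m) ℝ}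

lemma Matrix.PosDef.transpose_mul_mul_of_linearIndependent (hA : A.PosDef)
    (hZ : LinearIndependent ℝ Zᵀ) : (Zᵀ * A * Z).PosDef :=
  hA.conjTranspose_mul_mul_same (Matrix.mulVec_injective_iff.2 hZ)

lemma coarseCorrection_galerkin_mul (hA : A.PosDef) (hZ : LinearIndependent ℝ Zᵀ) :
    coarseCorrection A Z (Zᵀ * A * Z) * Z = Z := by
  have hE := (hA.transpose_mul_mul_of_linearIndependent hZ).isUnit
  calc Z * (Zᵀ * A * Z)⁻¹ * Zᵀ * A * Z = Z * ((Zᵀ * A * Z)⁻¹ * (Zᵀ * A * Z)) := by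
        simp only [Matrix.mul_assoc]
    _ = Z := by rw [nonsing_inv_mul _ ((isUnit_iff_isUnit_det _).1 hE), Matrix.mul_one]

lemma transpose_mul_mul_coarseCorrection_galerkin (hA : A.PosDef)
    (hZ : LinearIndependent ℝ Zᵀ) :
    Zᵀ * A * coarseCorrection A Z (Zᵀ * A * Z) = Zᵀ * A := by
  have hE := (hA.transpose_mul_mul_of_linearIndependent hZ).isUnit
  simp only [coarseCorrection, ← Matrix.mul_assoc]
  rw [mul_nonsing_inv _ ((isUnit_iff_isUnit_det _).1 hE), Matrix.one_mul]

lemma aNorm_coarseCorrection_galerkin_mulVec_le (hA : A.PosDef) (hZ : LinearIndependent ℝ Zᵀ)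
    (U : Fin n → ℝ) : aNorm A (coarseCorrection A Z (Zᵀ * A * Z) *ᵥ U) ≤ aNorm A U := by
  set P := coarseCorrection A Z (Zᵀ * A * Z)
  set c := (Zᵀ * A * Z)⁻¹ *ᵥ (Zᵀ *ᵥ (A *ᵥ U))
  have hPU : P *ᵥ U = Z *ᵥ c := by
    simp only [P, c, coarseCorrection, mulVec_mulVec, Matrix.mul_assoc]
  have hsq : aNorm A (P *ᵥ U) ^ 2 ≤ aNorm A (P *ᵥ U) * aNorm A U :=
    calc aNorm A (P *ᵥ U) ^ 2 = (A *ᵥ (P *ᵥ U)) ⬝ᵥ (Z *ᵥ c) := by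
          rw [aNorm_sq hA.posSemidef, hPU]
      _ = (A *ᵥ U) ⬝ᵥ (Z *ᵥ c) := by
          rw [mulVec_dotProduct_mulVec A Z, mulVec_dotProduct_mulVec A Z, mulVec_mulVec,
            transpose_mul_mul_coarseCorrection_galerkin hA hZ]
      _ ≤ aNorm A (P *ᵥ U) * aNorm A U := hPU ▸ mulVec_dotProduct_le_aNorm_mul hA.posSemidef _ _
  nlinarith [aNorm_nonneg A U, aNorm_nonneg A (P *ᵥ U)]

lemma aNorm_mulVec_add_inv_mulVec_le (hA : A.PosDef) (hZ : LinearIndependent ℝ Zᵀ)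
    (Et : Matrix (Fin m) (Fin m) ℝ) {W : Fin n → ℝ} {β : Fin m → ℝ} {c : ℝ}
    (hW : aNorm A W ≤ c * aNorm A (W + Z *ᵥ β)) :
    aNorm A (Z *ᵥ (β + Et⁻¹ *ᵥ (Zᵀ *ᵥ (A *ᵥ W))))
      ≤ (1 + aOpNorm A (coarseCorrection A Z (Zᵀ * A * Z) - coarseCorrection A Z Et) * c)
        * aNorm A (W + Z *ᵥ β) := by
  set P₀ := coarseCorrection A Z (Zᵀ * A * Z)
  set ε := aOpNorm A (P₀ - coarseCorrection A Z Et)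
  have hsplit : Z *ᵥ (β + Et⁻¹ *ᵥ (Zᵀ *ᵥ (A *ᵥ W)))
      = P₀ *ᵥ (W + Z *ᵥ β) - (P₀ - coarseCorrection A Z Et) *ᵥ W := by
    rw [mulVec_add P₀, mulVec_mulVec _ P₀, coarseCorrection_galerkin_mul hA hZ, sub_mulVec]
    simp only [coarseCorrection, mulVec_add, mulVec_mulVec, Matrix.mul_assoc]
    abel
  calc _ ≤ aNorm A (W + Z *ᵥ β) + ε * aNorm A W := by
        rw [hsplit]
        exact (aNorm_sub_le hA.posSemidef _ _).trans
          (add_le_add (aNorm_coarseCorrection_galerkin_mulVec_le hA hZ _)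
            (aNorm_mulVec_le_aOpNorm_mul hA _ _))
    _ ≤ aNorm A (W + Z *ᵥ β) + ε * (c * aNorm A (W + Z *ᵥ β)) := by
        gcongr
        exact aOpNorm_nonneg _ _
    _ = _ := by ring

end CoarseCorrection

section LocalComponents

variable {n m : ℕ} {ι : Type*} [Fintype ι] {d : ι → Type*} [∀ i, Fintype (d i)]

lemma exists_eq_sum_add_mulVec [∀ i, DecidableEq (d i)] {Z : Matrix (Fin n) (Fin m) ℝ}
    (R : ∀ i, Matrix (d i) (Fin n) ℝ) (D π : ∀ i, Matrix (d i) (d i) ℝ)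
    (hPOU : ∑ i, (R i)ᵀ * D i * R i = 1)
    (hπ : ∀ i (v : d i → ℝ),
      ((R i)ᵀ * D i * π i) *ᵥ v ∈ Set.range (fun β : Fin m → ℝ => Z *ᵥ β))
    (U : Fin n → ℝ) :
    ∃ β, U = ∑ i, (R i)ᵀ *ᵥ (D i *ᵥ ((1 - π i) *ᵥ (R i *ᵥ U))) + Z *ᵥ β := by
  choose b hb using fun i => hπ i (R i *ᵥ U)
  refine ⟨∑ i, b i, ?_⟩
  calc U = (∑ i, (R i)ᵀ * D i * R i) *ᵥ U := by rw [hPOU, one_mulVec]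
    _ = ∑ i, ((R i)ᵀ *ᵥ (D i *ᵥ ((1 - π i) *ᵥ (R i *ᵥ U))) + Z *ᵥ b i) := by
        rw [sum_mulVec]
        refine Finset.sum_congr rfl fun i _ => ?_
        rw [show Z *ᵥ b i = _ from hb i]
        simp only [mulVec_mulVec, ← add_mulVec]
        congr 1
        simp only [Matrix.sub_mul, Matrix.mul_sub, Matrix.one_mul, Matrix.mul_assoc]
        abel
    _ = _ := by rw [Finset.sum_add_distrib, mulVec_sum]

lemma aNorm_sum_le_sqrt_mul_aNorm {A : Matrix (Fin n) (Fin n) ℝ} (hA : A.PosSemidef)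
    {k₀ κ : ℝ} (hk₀ : 0 ≤ k₀) (hκ : 0 ≤ κ) (R : ∀ i, Matrix (d i) (Fin n) ℝ)
    (V : ∀ i, d i → ℝ) (U : Fin n → ℝ)
    (hstable : (A *ᵥ (∑ i, (R i)ᵀ *ᵥ V i)) ⬝ᵥ (∑ i, (R i)ᵀ *ᵥ V i)
        ≤ k₀ * ∑ i, (A *ᵥ ((R i)ᵀ *ᵥ V i)) ⬝ᵥ ((R i)ᵀ *ᵥ V i))
    (hlocal : ∑ i, ((R i * A * (R i)ᵀ) *ᵥ V i) ⬝ᵥ V i ≤ κ * ((A *ᵥ U) ⬝ᵥ U)) :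
    aNorm A (∑ i, (R i)ᵀ *ᵥ V i) ≤ Real.sqrt (k₀ * κ) * aNorm A U := by
  rw [← pow_le_pow_iff_left₀ (aNorm_nonneg A _)
    (mul_nonneg (Real.sqrt_nonneg _) (aNorm_nonneg A U)) two_ne_zero, mul_pow,
    Real.sq_sqrt (by positivity), aNorm_sq hA, aNorm_sq hA, mul_assoc]
  refine hstable.trans (mul_le_mul_of_nonneg_left (le_trans (le_of_eq ?_) hlocal) hk₀)
  simp only [← transpose_mul_mul_mulVec_dotProduct, transpose_transpose]

end LocalComponents

lemma div_add_mul_mul_add_le {μ κ c e a s : ℝ} (hμ : 0 < μ) (hκ : 0 < κ) (hc : 0 ≤ c)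
    (he : μ * e ≤ c * s) (ha : a ≤ κ * s) : μ / (c + μ * κ) * (e + a) ≤ s := by
  rw [div_mul_eq_mul_div, div_le_iff₀ (by positivity)]
  nlinarith [mul_le_mul_of_nonneg_left ha hμ.le]

theorem stmt8_general {n m N : ℕ} (A : Matrix (Fin n) (Fin n) ℝ) (hA : A.PosDef)
    (Z : Matrix (Fin n) (Fin m) ℝ) (hZ : LinearIndependent ℝ Zᵀ)
    (Et : Matrix (Fin m) (Fin m) ℝ)
    (nd : Fin N → ℕ)
    (R : ∀ i : Fin N, Matrix (Fin (nd i)) (Fin n) ℝ)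
    (D : ∀ i : Fin N, Matrix (Fin (nd i)) (Fin (nd i)) ℝ)
    (k₀ k₁ τ μ' : ℝ) (hk₀ : 0 < k₀) (hk₁ : 0 < k₁) (hτ : 0 < τ) (hμ' : 0 < μ')
    (hPOU : ∑ i, (R i)ᵀ * D i * R i = (1 : Matrix (Fin n) (Fin n) ℝ))
    (hk₀bound : ∀ U : ∀ i : Fin N, Fin (nd i) → ℝ,
      (A *ᵥ (∑ i, (R i)ᵀ *ᵥ U i)) ⬝ᵥ (∑ i, (R i)ᵀ *ᵥ U i)
        ≤ k₀ * ∑ i, (A *ᵥ ((R i)ᵀ *ᵥ U i)) ⬝ᵥ ((R i)ᵀ *ᵥ U i))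
    (π : ∀ j : Fin N, Matrix (Fin (nd j)) (Fin (nd j)) ℝ)
    (hGenEO : ∀ U : Fin n → ℝ,
      ∑ j, ((R j * A * (R j)ᵀ) *ᵥ ((D j) *ᵥ ((1 - π j) *ᵥ ((R j) *ᵥ U)))) ⬝ᵥ
          ((D j) *ᵥ ((1 - π j) *ᵥ ((R j) *ᵥ U)))
        ≤ k₁ * τ * ((A *ᵥ U) ⬝ᵥ U))
    (hπV₀ : ∀ j (v : Fin (nd j) → ℝ),
      ((R j)ᵀ * D j * π j) *ᵥ v ∈ Set.range (fun β : Fin m → ℝ => Z *ᵥ β))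
    (hEμ' : ∀ u : Fin m → ℝ, μ' * ((Et *ᵥ u) ⬝ᵥ u) ≤ ((Zᵀ * A * Z) *ᵥ u) ⬝ᵥ u)
    (εA cT : ℝ)
    (hεA : εA = aOpNorm A (Z * (Zᵀ * A * Z)⁻¹ * Zᵀ * A - Z * Et⁻¹ * Zᵀ * A))
    (hcT : cT = μ' / ((1 + εA * Real.sqrt (k₀ * k₁ * τ)) ^ 2 + μ' * k₁ * τ)) :
    ∀ U : Fin n → ℝ, ∃ U₀ : Fin m → ℝ,
      U = Z *ᵥ U₀ + (1 - Z * Et⁻¹ * Zᵀ * A) *ᵥ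
            (∑ i, (R i)ᵀ *ᵥ ((D i) *ᵥ ((1 - π i) *ᵥ ((R i) *ᵥ U))))
      ∧ cT * ((Et *ᵥ U₀) ⬝ᵥ U₀
            + ∑ i, ((R i * A * (R i)ᵀ) *ᵥ ((D i) *ᵥ ((1 - π i) *ᵥ ((R i) *ᵥ U)))) ⬝ᵥ
                ((D i) *ᵥ ((1 - π i) *ᵥ ((R i) *ᵥ U))))
          ≤ (A *ᵥ U) ⬝ᵥ U := by
  intro U
  obtain ⟨β, hU⟩ := exists_eq_sum_add_mulVec R D π hPOU hπV₀ U
  set W := ∑ i, (R i)ᵀ *ᵥ ((D i) *ᵥ ((1 - π i) *ᵥ ((R i) *ᵥ U)))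
  have hW : aNorm A W ≤ Real.sqrt (k₀ * k₁ * τ) * aNorm A U := by
    rw [mul_assoc k₀]
    exact aNorm_sum_le_sqrt_mul_aNorm hA.posSemidef hk₀.le (by positivity) R _ U
      (hk₀bound _) (hGenEO U)
  set U₀ := β + Et⁻¹ *ᵥ (Zᵀ *ᵥ (A *ᵥ W))
  refine ⟨U₀, ?_, ?_⟩
  · conv_lhs => rw [hU]
    simp only [U₀, mulVec_add, sub_mulVec, one_mulVec, mulVec_mulVec, Matrix.mul_assoc]
    abel
  have hcoarse : μ' * ((Et *ᵥ U₀) ⬝ᵥ U₀)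
      ≤ (1 + εA * Real.sqrt (k₀ * k₁ * τ)) ^ 2 * ((A *ᵥ U) ⬝ᵥ U) := by
    rw [hU] at hW
    refine (hEμ' _).trans ?_
    rw [transpose_mul_mul_mulVec_dotProduct, ← aNorm_sq hA.posSemidef,
      ← aNorm_sq hA.posSemidef, ← mul_pow, hU, hεA]
    exact pow_le_pow_left₀ (aNorm_nonneg A _) (aNorm_mulVec_add_inv_mulVec_le hA hZ Et hW) 2
  rw [hcT, mul_assoc μ']
  exact div_add_mul_mul_add_le hμ' (by positivity) (sq_nonneg _) hcoarse (hGenEO U)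

/-- Stable decomposition for GenEO with inexact coarse solve: under the
partition of unity, the `k₀`-bound, the GenEO bound with constant `k₁ τ`, the coarse-space
inclusion `range(R_jᵀ D_j π̃_j) ⊆ V₀` and `μ′ ⟨Ẽ u, u⟩ ≤ ⟨E u, u⟩`, for every `U` there
exist `U₀` and `U_i := D_i (I − π̃_i) R_i U` with
`U = Z U₀ + (I − P̃₀) ∑ R_iᵀ U_i` and
`c_T (⟨Ẽ U₀, U₀⟩ + ∑ ⟨R_i A R_iᵀ U_i, U_i⟩) ≤ ⟨A U, U⟩`, where
`c_T = μ′ / ((1 + ε_A √(k₀ k₁ τ))² + μ′ k₁ τ)` and `ε_A = ‖P₀ − P̃₀‖_A`. -/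
theorem stmt8 {n m N : ℕ} (A : Matrix (Fin n) (Fin n) ℝ) (hA : A.PosDef)
    (Z : Matrix (Fin n) (Fin m) ℝ) (hZ : LinearIndependent ℝ Zᵀ)
    (Et : Matrix (Fin m) (Fin m) ℝ) (hEt : Et.PosDef)
    (nd : Fin N → ℕ)
    (R : ∀ i : Fin N, Matrix (Fin (nd i)) (Fin n) ℝ)
    (D : ∀ i : Fin N, Matrix (Fin (nd i)) (Fin (nd i)) ℝ)
    (hD : ∀ i, (D i).IsDiag)
    (k₀ k₁ τ μ' : ℝ) (hk₀ : 0 < k₀) (hk₁ : 0 < k₁) (hτ : 0 < τ) (hμ' : 0 < μ')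
    (hPOU : ∑ i, (R i)ᵀ * D i * R i = (1 : Matrix (Fin n) (Fin n) ℝ))
    (hk₀bound : ∀ U : ∀ i : Fin N, Fin (nd i) → ℝ,
      (A *ᵥ (∑ i, (R i)ᵀ *ᵥ U i)) ⬝ᵥ (∑ i, (R i)ᵀ *ᵥ U i)
        ≤ k₀ * ∑ i, (A *ᵥ ((R i)ᵀ *ᵥ U i)) ⬝ᵥ ((R i)ᵀ *ᵥ U i))
    (π : ∀ j : Fin N, Matrix (Fin (nd j)) (Fin (nd j)) ℝ)
    (hGenEO : ∀ U : Fin n → ℝ,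
      ∑ j, ((R j * A * (R j)ᵀ) *ᵥ ((D j) *ᵥ ((1 - π j) *ᵥ ((R j) *ᵥ U)))) ⬝ᵥ
          ((D j) *ᵥ ((1 - π j) *ᵥ ((R j) *ᵥ U)))
        ≤ k₁ * τ * ((A *ᵥ U) ⬝ᵥ U))
    (hπV₀ : ∀ j (v : Fin (nd j) → ℝ),
      ((R j)ᵀ * D j * π j) *ᵥ v ∈ Set.range (fun β : Fin m → ℝ => Z *ᵥ β))
    (hEμ' : ∀ u : Fin m → ℝ, μ' * ((Et *ᵥ u) ⬝ᵥ u) ≤ ((Zᵀ * A * Z) *ᵥ u) ⬝ᵥ u)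
    (εA cT : ℝ)
    (hεA : εA = aOpNorm A (Z * (Zᵀ * A * Z)⁻¹ * Zᵀ * A - Z * Et⁻¹ * Zᵀ * A))
    (hcT : cT = μ' / ((1 + εA * Real.sqrt (k₀ * k₁ * τ)) ^ 2 + μ' * k₁ * τ)) :
    ∀ U : Fin n → ℝ, ∃ U₀ : Fin m → ℝ,
      U = Z *ᵥ U₀ + (1 - Z * Et⁻¹ * Zᵀ * A) *ᵥ
            (∑ i, (R i)ᵀ *ᵥ ((D i) *ᵥ ((1 - π i) *ᵥ ((R i) *ᵥ U))))
      ∧ cT * ((Et *ᵥ U₀) ⬝ᵥ U₀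
            + ∑ i, ((R i * A * (R i)ᵀ) *ᵥ ((D i) *ᵥ ((1 - π i) *ᵥ ((R i) *ᵥ U)))) ⬝ᵥ
                ((D i) *ᵥ ((1 - π i) *ᵥ ((R i) *ᵥ U))))
          ≤ (A *ᵥ U) ⬝ᵥ U :=
  stmt8_general A hA Z hZ Et nd R D k₀ k₁ τ μ' hk₀ hk₁ hτ hμ' hPOU hk₀bound π hGenEO hπV₀ hEμ' εA cT
    hεA hcT
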